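/- Let G and H be connected graphs. Then PI_w(G × H) = |V(G)|² PI_w(H) + |V(H)|² PI_w(G) + 4(|V(G)||E(G)| PI_v(H) + |V(H)||E(H)| PI_v(G)), where G × H is the Cartesian product. -/

import Mathlib

open Finset
open scoped Classical

/-- Number of vertices strictly closer to `u` than to `v`. -/
noncomputable def ncl {V : Type*} [Fintype V] (G : SimpleGraph V) (u v : V) : ℕ :=
  (Finset.univ.filter fun x => G.dist x u < G.dist x v).card

/-- Weighted vertex PI index: each edge `uv` contributes
`(deg u + deg v) * (n_u(e) + n_v(e))`; each edge is counted twice in the double sum. -/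
noncomputable def PIw {V : Type*} [Fintype V] (G : SimpleGraph V) : ℝ :=
  (∑ u, ∑ v, if G.Adj u v then
    (((G.degree u + G.degree v : ℕ) : ℝ) * ((ncl G u v + ncl G v u : ℕ) : ℝ)) else 0) / 2

/-- Vertex PI index. -/
noncomputable def PIv {V : Type*} [Fintype V] (G : SimpleGraph V) : ℝ :=
  (∑ u, ∑ v, if G.Adj u v then ((ncl G u v + ncl G v u : ℕ) : ℝ) else 0) / 2

/-!
Distances in `G □ H` add coordinatewise, so for an edge `(a, b)(a, d)` inside an `H`-fibre the
vertices closer to `(a, b)` are exactly `V × {y | y closer to b in H}`: its `n_u + n_v` is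
`|V| (n_b + n_d)`, while its degree weight is `2 deg_G a + deg_H b + deg_H d`. Summing over the
fibres `a ∈ V` with the handshake lemma `∑ deg_G = 2 |E(G)|` gives
`|V|² PI_w(H) + 4 |V| |E(G)| PI_v(H)`; the edges inside `G`-fibres contribute symmetrically.
-/

namespace SimpleGraph

variable {V W : Type*} {G : SimpleGraph V} {H : SimpleGraph W}

lemma dist_boxProd (hG : G.Connected) (hH : H.Connected) (x y : V × W) :
    (G □ H).dist x y = G.dist x.1 y.1 + H.dist x.2 y.2 := by
  rw [dist, edist_boxProd, ENat.toNat_add (edist_ne_top_iff_reachable.2 (hG x.1 y.1))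
    (edist_ne_top_iff_reachable.2 (hH x.2 y.2))]
  rfl

/-- Unlike `degree_boxProd`, this form is usable by `simp`: there the instance arguments mention
`(a, b).1`, which `simp` does not reduce. -/
lemma degree_boxProd_mk (a : V) (b : W) [Fintype (G.neighborSet a)] [Fintype (H.neighborSet b)]
    [Fintype ((G □ H).neighborSet (a, b))] : (G □ H).degree (a, b) = G.degree a + H.degree b :=
  degree_boxProd (a, b)

variable [Fintype V] [Fintype W]

lemma ncl_boxProd_left (hG : G.Connected) (hH : H.Connected) (a c : V) (b : W) :
    ncl (G □ H) (a, b) (c, b) = ncl G a c * Fintype.card W := by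
  rw [ncl, ncl, ← card_univ, ← card_product, ← filter_product_left, univ_product_univ]
  simp [dist_boxProd hG hH]

lemma ncl_boxProd_right (hG : G.Connected) (hH : H.Connected) (a : V) (b d : W) :
    ncl (G □ H) (a, b) (a, d) = Fintype.card V * ncl H b d := by
  rw [ncl, ncl, ← card_univ, ← card_product, ← filter_product_right, univ_product_univ]
  simp [dist_boxProd hG hH]

noncomputable def nclSym (G : SimpleGraph V) (u v : V) : ℕ := ncl G u v + ncl G v u

lemma nclSym_boxProd_left (hG : G.Connected) (hH : H.Connected) (a c : V) (b : W) :
    nclSym (G □ H) (a, b) (c, b) = nclSym G a c * Fintype.card W := by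
  rw [nclSym, nclSym, ncl_boxProd_left hG hH, ncl_boxProd_left hG hH, add_mul]

lemma nclSym_boxProd_right (hG : G.Connected) (hH : H.Connected) (a : V) (b d : W) :
    nclSym (G □ H) (a, b) (a, d) = Fintype.card V * nclSym H b d := by
  rw [nclSym, nclSym, ncl_boxProd_right hG hH, ncl_boxProd_right hG hH, mul_add]

section adjSum

variable {α M R : Type*} [Fintype α] [AddCommMonoid M] [NonUnitalNonAssocSemiring R]

noncomputable def adjSum (G : SimpleGraph α) (f : α → α → M) : M :=
  ∑ u, ∑ v, if G.Adj u v then f u v else 0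

lemma adjSum_add (G : SimpleGraph α) (f g : α → α → M) :
    G.adjSum (fun u v => f u v + g u v) = G.adjSum f + G.adjSum g := by
  simp only [adjSum, ← sum_add_distrib, ite_add_ite, add_zero]

lemma mul_adjSum (G : SimpleGraph α) (c : R) (f : α → α → R) :
    c * G.adjSum f = G.adjSum (fun u v => c * f u v) := by
  simp only [adjSum, mul_sum, mul_ite, mul_zero]

lemma adjSum_boxProd (F : V × W → V × W → M) :
    (G □ H).adjSum F =
      ∑ a, H.adjSum (fun b d => F (a, b) (a, d)) + ∑ b, G.adjSum (fun a c => F (a, b) (c, b)) := by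
  have hsplit : ∀ a c b d, (if (G □ H).Adj (a, b) (c, d) then F (a, b) (c, d) else 0) =
      (if a = c then if H.Adj b d then F (a, b) (c, d) else 0 else 0) +
        (if b = d then if G.Adj a c then F (a, b) (c, d) else 0 else 0) := by
    intro a c b d
    by_cases hac : a = c <;> by_cases hbd : b = d <;> simp [boxProd_adj, hac, hbd]
  simp only [adjSum, Fintype.sum_prod_type, hsplit, sum_add_distrib, sum_ite_irrel, sum_const_zero,
    sum_ite_eq, mem_univ, if_true]
  exact congrArg _ sum_comm

end adjSum

lemma sum_adjSum_two_mul_degree_add_mul {R : Type*} [CommSemiring R] (G : SimpleGraph V)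
    [∀ v, Fintype (G.neighborSet v)] [Fintype G.edgeSet] (H : SimpleGraph W) (g f : W → W → R) :
    ∑ a, H.adjSum (fun b d => (2 * G.degree a + g b d) * f b d) =
      4 * #G.edgeFinset * H.adjSum f + Fintype.card V * H.adjSum (fun b d => g b d * f b d) := by
  have handshake : ∑ a, G.degree a = 2 * #G.edgeFinset := by
    convert G.sum_degrees_eq_twice_card_edges
  simp only [add_mul, adjSum_add, ← mul_adjSum, sum_add_distrib, ← sum_mul, ← mul_sum, sum_const,
    card_univ, nsmul_eq_mul]
  rw [← Nat.cast_sum, handshake]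
  push_cast
  ring

end SimpleGraph

open SimpleGraph

lemma PIw_eq_adjSum {V : Type*} [Fintype V] (G : SimpleGraph V) :
    PIw G = G.adjSum (fun u v => ((G.degree u + G.degree v : ℕ) : ℝ) * nclSym G u v) / 2 :=
  rfl

lemma PIv_eq_adjSum {V : Type*} [Fintype V] (G : SimpleGraph V) :
    PIv G = G.adjSum (fun u v => (nclSym G u v : ℝ)) / 2 :=
  rfl

theorem PIw_boxProd {V W : Type*} [Fintype V] [Fintype W]
    (G : SimpleGraph V) (H : SimpleGraph W) (hG : G.Connected) (hH : H.Connected) :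
    PIw (G.boxProd H) =
      (Fintype.card V : ℝ) ^ 2 * PIw H + (Fintype.card W : ℝ) ^ 2 * PIw G +
      4 * ((Fintype.card V : ℝ) * (G.edgeFinset.card : ℝ) * PIv H +
           (Fintype.card W : ℝ) * (H.edgeFinset.card : ℝ) * PIv G) := by
  have weight_H_fibre : ∀ p q r n N : ℕ, ((p + q + (p + r) : ℕ) : ℝ) * ((n * N : ℕ) : ℝ) =
      n * ((2 * p + ((q + r : ℕ) : ℝ)) * N) := by
    intros; push_cast; ring
  have weight_G_fibre : ∀ p q r n N : ℕ, ((p + q + (r + q) : ℕ) : ℝ) * ((N * n : ℕ) : ℝ) =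
      n * ((2 * q + ((p + r : ℕ) : ℝ)) * N) := by
    intros; push_cast; ring
  rw [PIw_eq_adjSum, adjSum_boxProd]
  simp only [degree_boxProd_mk, nclSym_boxProd_right hG hH, nclSym_boxProd_left hG hH,
    weight_H_fibre, weight_G_fibre, ← mul_adjSum, ← mul_sum]
  rw [sum_adjSum_two_mul_degree_add_mul, sum_adjSum_two_mul_degree_add_mul, PIw_eq_adjSum,
    PIw_eq_adjSum, PIv_eq_adjSum, PIv_eq_adjSum]
  ring
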